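/- Let T be a proper binary tree with saturated vertices u and w such that R_T(u) = R_T(w). Let u_1, w_1 be the respective siblings of u and w, u_0, w_0 their respective parents, assume u_0 is an ancestor of w_0, and let w_p be the parent of w_0. Suppose R_T(w_1) < R_T(u) = R_T(w), u_0 is not the root of T, u_0 v_1 v_2 ⋯ v_t is the path in T from u_0 to the root v_t, and R_T(v_1) > R_T(w_1). If there exists i with 1 ≤ i ≤ t such that R_T(v_i) ≤ R_T(w_1), let s+1 ∈ {2,3,…,t} be minimal such that R_T(v_{s+1}) ≤ R_T(w_1). Then the tree T* obtained from T by deleting the edges w_0w, w_pw_0 and v_{s+1}v_s and adding the edges v_{s+1}w_0, v_sw_0 and w_pw satisfies R(T*) ≥ R(T). -/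
import Mathlib


/-- Proper binary trees: every internal vertex has exactly two children. -/
inductive BTree : Type
  | leaf : BTree
  | node : BTree → BTree → BTree
  deriving DecidableEq

namespace BTree

/-- The rank (protection number) of the root of a proper binary tree:
the minimum distance from the root to a leaf descendant. -/
def rank : BTree → ℕ
  | leaf => 0
  | node l r => min l.rank r.rank + 1

/-- The security of a proper binary tree: the sum of the ranks of all vertices. -/
def security : BTree → ℕ
  | leaf => 0
  | node l r => (node l r).rank + l.security + r.security

/-- The number of leaves. -/
def leafCount : BTree → ℕ
  | leaf => 1
  | node l r => l.leafCount + r.leafCount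

/-- The height: maximum distance from the root to a leaf. -/
def height : BTree → ℕ
  | leaf => 0
  | node l r => max l.height r.height + 1

/-- A tree is complete if all leaves are at the same depth. -/
def IsComplete : BTree → Prop
  | leaf => True
  | node l r => IsComplete l ∧ IsComplete r ∧ l.height = r.height

/-- The subtree at a given position (a list of directions from the root;
`false` = first child, `true` = second child), if the position exists. -/
def subtreeAt : BTree → List Bool → Option BTree
  | t, [] => some t
  | leaf, _ :: _ => none
  | node l _, false :: p => subtreeAt l p
  | node _ r, true :: p => subtreeAt r p

/-- Replace the subtree at a given position by `s`. -/
def replaceAt : BTree → List Bool → BTree → BTree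
  | _, [], s => s
  | leaf, _ :: _, _ => leaf
  | node l r, false :: p, s => node (replaceAt l p s) r
  | node l r, true :: p, s => node l (replaceAt r p s)

/-- The rank of the vertex at position `p` in `T` (rank of a vertex only depends
on the subtree consisting of the vertex and its descendants). -/
def rankAt (T : BTree) (p : List Bool) : ℕ := ((T.subtreeAt p).map rank).getD 0

/-- The vertex at position `p` in `T` is saturated: its subtree is complete, but the
subtree of none of its (proper) ancestors is complete. -/
def Saturated (T : BTree) (p : List Bool) : Prop :=
  (∃ s, T.subtreeAt p = some s ∧ IsComplete s) ∧
  ∀ q s, q <+: p → q ≠ p → T.subtreeAt q = some s → ¬ IsComplete s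

/-- The complete binary tree of height `m` (with `2 ^ m` leaves). -/
def completeTree : ℕ → BTree
  | 0 => leaf
  | m + 1 => node (completeTree m) (completeTree m)

/-- The tree `T_L` for `L = (n₁, …, n_k)`: a binary caterpillar whose spine vertices carry
complete binary trees with `2 ^ nᵢ` leaves. -/
def TL : List ℕ → BTree
  | [] => leaf
  | n :: ns => ns.foldl (fun acc m => node acc (completeTree m)) (completeTree n)

/-- Helper for the almost complete tree: a complete binary tree of height `m`
whose leftmost `r` leaves each receive two leaf children. -/
def buildF : ℕ → ℕ → BTree
  | 0, r => if r = 0 then leaf else node leaf leaf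
  | m + 1, r => node (buildF m (min r (2 ^ m))) (buildF m (r - 2 ^ m))

/-- The almost complete ("good") tree `F(ℓ)` on `ℓ` leaves. -/
def F (ℓ : ℕ) : BTree := buildF (Nat.log 2 ℓ) (ℓ - 2 ^ Nat.log 2 ℓ)

end BTree

namespace BTree

lemma subtreeAt_append (p q : List Bool) : ∀ (T : BTree),
    subtreeAt T (p ++ q) = (subtreeAt T p).bind (fun s => subtreeAt s q) := by
  induction p with
  | nil => intro T; simp [subtreeAt]
  | cons d p ih =>
    intro T
    cases T with
    | leaf => simp [subtreeAt]
    | node l r => cases d <;> simp [subtreeAt, ih]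

lemma replaceAt_append (p q : List Bool) : ∀ (T X Y : BTree),
    subtreeAt T p = some X → replaceAt T (p ++ q) Y = replaceAt T p (replaceAt X q Y) := by
  induction p with
  | nil =>
    intro T X Y h
    simp [subtreeAt] at h
    subst h
    simp [replaceAt]
  | cons d p ih =>
    intro T X Y h
    cases T with
    | leaf => simp [subtreeAt] at h
    | node l r =>
      cases d <;> simp [subtreeAt] at h <;> simp [replaceAt, ih _ _ _ h]

lemma subtreeAt_replaceAt (p : List Bool) : ∀ (T X Y : BTree),
    subtreeAt T p = some X → subtreeAt (replaceAt T p Y) p = some Y := by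
  induction p with
  | nil => intro T X Y h; simp [subtreeAt, replaceAt]
  | cons d p ih =>
    intro T X Y h
    cases T with
    | leaf => simp [subtreeAt] at h
    | node l r =>
      cases d <;> simp [subtreeAt, replaceAt] at h ⊢ <;> exact ih _ _ _ h

lemma replaceAt_replaceAt (p : List Bool) : ∀ (T X Y Z : BTree),
    subtreeAt T p = some X →
    replaceAt (replaceAt T p Y) p Z = replaceAt T p Z := by
  induction p with
  | nil => intro T X Y Z _; simp [replaceAt]
  | cons d p ih =>
    intro T X Y Z h
    cases T with
    | leaf => simp [subtreeAt] at h
    | node l r =>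
      cases d <;> simp [subtreeAt] at h <;> simp [replaceAt, ih _ _ _ _ h]

lemma rank_replaceAt_ge (p : List Bool) : ∀ (T X Y : BTree),
    subtreeAt T p = some X → X.rank ≤ Y.rank → T.rank ≤ (replaceAt T p Y).rank := by
  induction p with
  | nil =>
    intro T X Y h hr
    simp [subtreeAt] at h
    subst h
    simpa [replaceAt] using hr
  | cons d p ih =>
    intro T X Y h hr
    cases T with
    | leaf => simp [subtreeAt] at h
    | node l r =>
      cases d <;> simp [subtreeAt] at h <;> simp only [replaceAt, rank]
      · exact Nat.succ_le_succ (min_le_min (ih _ _ _ h hr) le_rfl)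
      · exact Nat.succ_le_succ (min_le_min le_rfl (ih _ _ _ h hr))

lemma security_replaceAt_le (p : List Bool) : ∀ (T X Y : BTree),
    subtreeAt T p = some X → X.rank ≤ Y.rank →
    T.security + Y.security ≤ (replaceAt T p Y).security + X.security := by
  induction p with
  | nil =>
    intro T X Y h _
    simp [subtreeAt] at h
    subst h
    simp [replaceAt]
    omega
  | cons d p ih =>
    intro T X Y h hr
    cases T with
    | leaf => simp [subtreeAt] at h
    | node l r =>
      cases d <;> simp [subtreeAt] at h
      · have h1 := ih _ _ Y h hr
        have h2 := rank_replaceAt_ge p _ _ Y h hr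
        have h3 : min l.rank r.rank ≤ min (replaceAt l p Y).rank r.rank :=
          min_le_min h2 le_rfl
        simp only [replaceAt, security, rank]
        omega
      · have h1 := ih _ _ Y h hr
        have h2 := rank_replaceAt_ge p _ _ Y h hr
        have h3 : min l.rank r.rank ≤ min l.rank (replaceAt r p Y).rank :=
          min_le_min le_rfl h2
        simp only [replaceAt, security, rank]
        omega

lemma subtreeAt_prefix (T : BTree) (p q : List Bool) (x : BTree)
    (h : subtreeAt T (p ++ q) = some x) : ∃ y, subtreeAt T p = some y := by
  rw [subtreeAt_append] at h
  cases hZ : subtreeAt T p with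
  | none => rw [hZ] at h; simp at h
  | some Z => exact ⟨Z, rfl⟩

lemma subtreeAt_children (T : BTree) (p : List Bool) (d : Bool) (x y : BTree)
    (hx : subtreeAt T (p ++ [d]) = some x) (hy : subtreeAt T (p ++ [!d]) = some y) :
    subtreeAt T p = some (if d then node y x else node x y) := by
  rw [subtreeAt_append] at hx hy
  cases hZ : subtreeAt T p with
  | none => rw [hZ] at hx; simp at hx
  | some Z =>
    rw [hZ] at hx hy
    cases Z with
    | leaf => cases d <;> simp [subtreeAt] at hx
    | node l r =>
      cases d <;> simp [subtreeAt] at hx hy <;> simp [hx, hy]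

lemma rank_node_comm (l r : BTree) : (node l r).rank = (node r l).rank := by
  simp [rank, Nat.min_comm]

lemma security_node_comm (l r : BTree) : (node l r).security = (node r l).security := by
  simp [security, rank, Nat.min_comm]
  omega

/-- Core numeric computation at the level of the subtree rooted at `v_{s+1}`. -/
lemma key (C C' O tw1 : BTree) (hC : tw1.rank + 1 ≤ C.rank) (hC' : C.rank ≤ C'.rank)
    (hO : O.rank + 1 ≤ tw1.rank)
    (hsec : C.security ≤ C'.security + (tw1.rank + 1) + tw1.security) :
    (node C O).rank = (node (node C' tw1) O).rank ∧
    (node C O).security ≤ (node (node C' tw1) O).security := by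
  have h1 : min C.rank O.rank = O.rank := min_eq_right (by omega)
  have h2 : min C'.rank tw1.rank = tw1.rank := min_eq_right (by omega)
  have h3 : min (tw1.rank + 1) O.rank = O.rank := min_eq_right (by omega)
  constructor
  · simp only [rank, h1, h2, h3]
  · simp only [security, rank, h1, h2, h3]
    omega

end BTree

open BTree in
/-- Switching lemma (Lemma sw4, case (1)): `u` (at position `pu0 ++ [du]`, parent `u₀` at
`pu0`) and `w` (at position `pw0 ++ [dw]`, parent `w₀` at `pw0`, sibling `w₁`) are saturated
vertices of equal rank, `u₀` is a proper ancestor of `w₀` and is not the root, and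
`R_T(w₁) < R_T(u) = R_T(w)`.  The path from `u₀` to the root is `u₀ v₁ ⋯ v_t` (so `v_i` sits
at position `pu0.take (t − i)`, where `t = pu0.length`), `R_T(v₁) > R_T(w₁)`, and `s + 1` with
`1 ≤ s`, `s + 1 ≤ t` is minimal such that `R_T(v_{s+1}) ≤ R_T(w₁)`.  The tree `T*` is obtained
by removing `w₀` (its child `w` takes its place as a child of `w_p`) and re-inserting `w₀`
(together with its other subtree `T(w₁)`) on the edge between `v_{s+1}` and `v_s`.  Then
`R(T*) ≥ R(T)`. -/
theorem switching_lemma_four_case_one (T tu tw tu1 tw1 : BTree) (pu0 pw0 : List Bool)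
    (du dw : Bool) (s : ℕ)
    (hu : T.subtreeAt (pu0 ++ [du]) = some tu)
    (hw : T.subtreeAt (pw0 ++ [dw]) = some tw)
    (hu1 : T.subtreeAt (pu0 ++ [!du]) = some tu1)
    (hw1 : T.subtreeAt (pw0 ++ [!dw]) = some tw1)
    (hsatu : Saturated T (pu0 ++ [du]))
    (hsatw : Saturated T (pw0 ++ [dw]))
    (hrank : tu.rank = tw.rank)
    (hanc : pu0 <+: pw0) (hanc' : pu0 ≠ pw0)
    (hroot : pu0 ≠ [])
    (hsib : tw1.rank + 1 ≤ tu.rank)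
    (hv1 : tw1.rank < T.rankAt (pu0.take (pu0.length - 1)))
    (hs1 : 1 ≤ s) (hst : s + 1 ≤ pu0.length)
    (hvs1 : T.rankAt (pu0.take (pu0.length - (s + 1))) ≤ tw1.rank)
    (hmin : ∀ i, 1 ≤ i → i ≤ s → tw1.rank < T.rankAt (pu0.take (pu0.length - i))) :
    ∀ A : BTree, (T.replaceAt pw0 tw).subtreeAt (pu0.take (pu0.length - s)) = some A →
      T.security ≤ ((T.replaceAt pw0 tw).replaceAt (pu0.take (pu0.length - s))
        (BTree.node A tw1)).security := by
  intro A hA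
  obtain ⟨e, he⟩ := hanc
  set k := pu0.length - (s + 1) with hk
  have hklt : k < pu0.length := by omega
  have hks : pu0.length - s = k + 1 := by omega
  set q' := pu0.take k with hq'def
  set q := pu0.take (pu0.length - s) with hqdef
  obtain ⟨c, hq⟩ : ∃ c, q = q' ++ [c] := by
    refine ⟨pu0[k], ?_⟩
    rw [hqdef, hks, List.take_succ, List.getElem?_eq_getElem hklt]
    rfl
  set m := pu0.drop (k + 1) with hm
  have hpu0 : pu0 = q ++ m := by
    rw [hqdef, hks, hm]
    exact (List.take_append_drop _ _).symm
  set f := m ++ e with hf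
  have hpw0 : pw0 = q ++ f := by
    rw [← he, hpu0, hf, List.append_assoc]
  -- the subtree W = w₀'s subtree at pw0
  have htw : tw1.rank + 1 ≤ tw.rank := hrank ▸ hsib
  obtain ⟨W, hW, hWr, hWs⟩ : ∃ W, T.subtreeAt pw0 = some W ∧ W.rank = tw1.rank + 1 ∧
      W.security = (tw1.rank + 1) + tw.security + tw1.security := by
    have h := subtreeAt_children T pw0 dw tw tw1 hw hw1
    cases dw <;> simp only [Bool.false_eq_true, if_false, if_true] at h <;>
      refine ⟨_, h, ?_, ?_⟩ <;> simp [rank, security] <;> omega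
  -- subtrees C (at q = position of v_s) and S (at q' = position of v_{s+1})
  obtain ⟨C, hC⟩ : ∃ C, T.subtreeAt q = some C := by
    apply subtreeAt_prefix T q f W
    rw [← hpw0]; exact hW
  obtain ⟨S, hS⟩ : ∃ S, T.subtreeAt q' = some S := by
    apply subtreeAt_prefix T q' [c] C
    rw [← hq]; exact hC
  have hSC : S.subtreeAt [c] = some C := by
    have := hC
    rw [hq, subtreeAt_append, hS] at this
    simpa using this
  have hCf : C.subtreeAt f = some W := by
    have := hW
    rw [hpw0, subtreeAt_append, hC] at this
    simpa using this
  -- the modified subtree C'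
  set C' := C.replaceAt f tw with hC'def
  have hT'1 : T.replaceAt pw0 tw = T.replaceAt q C' := by
    rw [hpw0]; exact replaceAt_append q f T C tw hC
  have hAeq : A = C' := by
    rw [hT'1, subtreeAt_replaceAt q T C C' hC] at hA
    exact (Option.some_inj.mp hA).symm
  subst hAeq
  -- rank facts
  have hCr : tw1.rank + 1 ≤ C.rank := by
    have h := hmin s hs1 le_rfl
    rw [← hqdef] at h
    rw [rankAt, hC] at h
    simpa using h
  have hWtw : W.rank ≤ tw.rank := by omega
  have hC'r : C.rank ≤ C'.rank := rank_replaceAt_ge f C W tw hCf hWtw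
  have hsecC : C.security ≤ C'.security + (tw1.rank + 1) + tw1.security := by
    have h := security_replaceAt_le f C W tw hCf hWtw
    rw [← hC'def] at h
    omega
  have hvs1' : S.rank ≤ tw1.rank := by
    rw [rankAt, hS] at hvs1
    simpa using hvs1
  -- S is an internal node
  cases S with
  | leaf => cases c <;> simp [subtreeAt] at hSC
  | node S0 S1 =>
    cases c with
    | false =>
      simp only [subtreeAt, Option.some_inj] at hSC
      subst hSC
      have hT'2 : T.replaceAt q C' = T.replaceAt q' (node C' S1) := by
        rw [hq]
        simpa [replaceAt] using replaceAt_append q' [false] T (node S0 S1) C' hS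
      have hTstar : (T.replaceAt pw0 tw).replaceAt q (node C' tw1)
          = T.replaceAt q' (node (node C' tw1) S1) := by
        rw [hT'1, hT'2, hq]
        rw [replaceAt_append q' [false] (T.replaceAt q' (node C' S1)) (node C' S1)
          (node C' tw1) (subtreeAt_replaceAt q' T (node S0 S1) (node C' S1) hS)]
        rw [replaceAt_replaceAt q' T (node S0 S1) (node C' S1) _ hS]
        simp [replaceAt]
      rw [hTstar]
      have hO : S1.rank + 1 ≤ tw1.rank := by
        simp only [rank] at hvs1'
        rcases min_choice S0.rank S1.rank with h | h <;> omega
      obtain ⟨hrkeq, hseckey⟩ := key S0 C' S1 tw1 hCr hC'r hO hsecC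
      have hfin := security_replaceAt_le q' T (node S0 S1) (node (node C' tw1) S1) hS
        (le_of_eq hrkeq)
      omega
    | true =>
      simp only [subtreeAt, Option.some_inj] at hSC
      subst hSC
      have hT'2 : T.replaceAt q C' = T.replaceAt q' (node S0 C') := by
        rw [hq]
        simpa [replaceAt] using replaceAt_append q' [true] T (node S0 S1) C' hS
      have hTstar : (T.replaceAt pw0 tw).replaceAt q (node C' tw1)
          = T.replaceAt q' (node S0 (node C' tw1)) := by
        rw [hT'1, hT'2, hq]
        rw [replaceAt_append q' [true] (T.replaceAt q' (node S0 C')) (node S0 C')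
          (node C' tw1) (subtreeAt_replaceAt q' T (node S0 S1) (node S0 C') hS)]
        rw [replaceAt_replaceAt q' T (node S0 S1) (node S0 C') _ hS]
        simp [replaceAt]
      rw [hTstar]
      have hO : S0.rank + 1 ≤ tw1.rank := by
        simp only [rank] at hvs1'
        rcases min_choice S0.rank S1.rank with h | h <;> omega
      obtain ⟨hrkeq, hseckey⟩ := key S1 C' S0 tw1 hCr hC'r hO hsecC
      have hrkeq' : (node S0 S1).rank = (node S0 (node C' tw1)).rank := by
        rw [rank_node_comm S0 S1, rank_node_comm S0 (node C' tw1)]; exact hrkeq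
      have hseckey' : (node S0 S1).security ≤ (node S0 (node C' tw1)).security := by
        rw [security_node_comm S0 S1, security_node_comm S0 (node C' tw1)]; exact hseckey
      have hfin := security_replaceAt_le q' T (node S0 S1) (node S0 (node C' tw1)) hS
        (le_of_eq hrkeq')
      omega
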